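/- arXiv:2502.09034 — 3 statements merged into one kernel-verified Lean document; each statement's English description precedes it below -/
import Mathlib

section
/- Let u, v, w be vectors in ℝ³ and c > 0 a real number. If |w| = 1 then (1/2)c|u|² + (1/(2c))|v|² − u ⋅ (v ×ᵥ w) = (1/2)|√c · u − (1/√c) (v ×ᵥ w)|² + (1/(2c))(v ⋅ w)². In particular, if c|u|² + (1/c)|v|² = 2 u ⋅ (v ×ᵥ w) and |w| = 1, then c • u = v ×ᵥ w and (1/c) • v = w ×ᵥ u. -/
noncomputable def cross3 (u v : EuclideanSpace ℝ (Fin 3)) : EuclideanSpace ℝ (Fin 3) :=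
  (WithLp.equiv 2 (Fin 3 → ℝ)).symm
    (crossProduct ((WithLp.equiv 2 (Fin 3 → ℝ)) u) ((WithLp.equiv 2 (Fin 3 → ℝ)) v))

lemma inner3 (u x : EuclideanSpace ℝ (Fin 3)) :
    (inner ℝ u x : ℝ) = u 0 * x 0 + u 1 * x 1 + u 2 * x 2 := by
  simp [PiLp.inner_apply, Fin.sum_univ_three, mul_comm]

lemma norm_sq3 (u : EuclideanSpace ℝ (Fin 3)) :
    ‖u‖ ^ 2 = u 0 ^ 2 + u 1 ^ 2 + u 2 ^ 2 := by
  rw [← real_inner_self_eq_norm_sq, inner3]; ring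

lemma cross3_apply0 (v w : EuclideanSpace ℝ (Fin 3)) :
    cross3 v w 0 = v 1 * w 2 - v 2 * w 1 := by
  simp [cross3, crossProduct]

lemma cross3_apply1 (v w : EuclideanSpace ℝ (Fin 3)) :
    cross3 v w 1 = v 2 * w 0 - v 0 * w 2 := by
  simp [cross3, crossProduct]

lemma cross3_apply2 (v w : EuclideanSpace ℝ (Fin 3)) :
    cross3 v w 2 = v 0 * w 1 - v 1 * w 0 := by
  simp [cross3, crossProduct]

/-- Conductivity (weighted) version of the completing-the-square identity, and its
consequence: equality in the weighted inequality forces the conjugacy relations. -/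
theorem stmt6 (u v w : EuclideanSpace ℝ (Fin 3)) (c : ℝ) (hc : 0 < c) (hw : ‖w‖ = 1) :
    ((1/2) * c * ‖u‖ ^ 2 + (1/(2*c)) * ‖v‖ ^ 2 - (inner ℝ u (cross3 v w) : ℝ) =
      (1/2) * ‖Real.sqrt c • u - (1 / Real.sqrt c) • cross3 v w‖ ^ 2 +
        (1/(2*c)) * (inner ℝ v w : ℝ) ^ 2) ∧
    (c * ‖u‖ ^ 2 + (1/c) * ‖v‖ ^ 2 = 2 * (inner ℝ u (cross3 v w) : ℝ) →
      c • u = cross3 v w ∧ (1/c) • v = cross3 w u) := by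
  have hwsq : w 0 ^ 2 + w 1 ^ 2 + w 2 ^ 2 = 1 := by
    rw [← norm_sq3, hw]; norm_num
  set s := Real.sqrt c with hs
  have hs2 : s ^ 2 = c := Real.sq_sqrt hc.le
  have hsne : s ≠ 0 := by positivity
  have hcne : c ≠ 0 := ne_of_gt hc
  have part1 : (1/2) * c * ‖u‖ ^ 2 + (1/(2*c)) * ‖v‖ ^ 2 - (inner ℝ u (cross3 v w) : ℝ) =
      (1/2) * ‖s • u - (1 / s) • cross3 v w‖ ^ 2 +
        (1/(2*c)) * (inner ℝ v w : ℝ) ^ 2 := by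
    rw [norm_sq3, norm_sq3, norm_sq3, inner3, inner3, cross3_apply0, cross3_apply1,
      cross3_apply2]
    simp only [PiLp.sub_apply, PiLp.smul_apply, smul_eq_mul, cross3_apply0, cross3_apply1,
      cross3_apply2]
    rw [← hs2] at hcne ⊢
    field_simp
    linear_combination (-(v 0^2+v 1^2+v 2^2)) * hwsq
  refine ⟨part1, fun h => ?_⟩
  have hx : ‖s • u - (1 / s) • cross3 v w‖ ^ 2 = 0 ∧ (inner ℝ v w : ℝ) = 0 := by
    have h0 : (1/2) * ‖s • u - (1 / s) • cross3 v w‖ ^ 2 +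
        (1/(2*c)) * (inner ℝ v w : ℝ) ^ 2 = 0 := by
      rw [← part1]; field_simp at h ⊢; linarith
    have h1 : (0:ℝ) ≤ ‖s • u - (1 / s) • cross3 v w‖ ^ 2 := sq_nonneg _
    have h2 : (0:ℝ) ≤ (inner ℝ v w : ℝ) ^ 2 := sq_nonneg _
    have hcpos : (0:ℝ) < 1/(2*c) := by positivity
    have e1 : ‖s • u - (1 / s) • cross3 v w‖ ^ 2 = 0 := by nlinarith
    have e2 : (inner ℝ v w : ℝ) ^ 2 = 0 := by nlinarith
    exact ⟨e1, pow_eq_zero_iff (by norm_num : (2:ℕ) ≠ 0) |>.mp e2⟩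
  have hd : s • u - (1 / s) • cross3 v w = 0 := by
    have := hx.1
    rwa [pow_eq_zero_iff (by norm_num : (2:ℕ) ≠ 0), norm_eq_zero] at this
  have hvw : v 0 * w 0 + v 1 * w 1 + v 2 * w 2 = 0 := by
    have := hx.2; rwa [inner3] at this
  have hcu : ∀ i, c * u i = cross3 v w i := by
    intro i
    have := congrFun (congrArg (fun z : EuclideanSpace ℝ (Fin 3) => (z : Fin 3 → ℝ)) hd) i
    simp only [PiLp.sub_apply, PiLp.smul_apply, smul_eq_mul, PiLp.zero_apply] at this
    have h' : s * u i = (1/s) * cross3 v w i := by linarith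
    calc c * u i = s * (s * u i) := by rw [← hs2]; ring
      _ = s * ((1/s) * cross3 v w i) := by rw [h']
      _ = cross3 v w i := by field_simp
  constructor
  · ext i
    simp only [PiLp.smul_apply, smul_eq_mul]
    exact hcu i
  · ext i
    have h0 := hcu 0; have h1 := hcu 1; have h2 := hcu 2
    rw [cross3_apply0] at h0; rw [cross3_apply1] at h1; rw [cross3_apply2] at h2
    simp only [PiLp.smul_apply, smul_eq_mul]
    fin_cases i
    · show 1/c * v 0 = cross3 w u 0
      rw [cross3_apply0]
      field_simp
      linear_combination (-(w 1))*h2 + (w 2)*h1 + (-(v 0))*hwsq + (w 0)*hvw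
    · show 1/c * v 1 = cross3 w u 1
      rw [cross3_apply1]
      field_simp
      linear_combination (-(w 2))*h0 + (w 0)*h2 + (-(v 1))*hwsq + (w 1)*hvw
    · show 1/c * v 2 = cross3 w u 2
      rw [cross3_apply2]
      field_simp
      linear_combination (-(w 0))*h1 + (w 1)*h0 + (-(v 2))*hwsq + (w 2)*hvw
end

section
/- Let A be a real 3×3 matrix with rows a₁, a₂, a₃ such that a₁ = a₂ ×ᵥ a₃, a₂ = a₃ ×ᵥ a₁, and |a₃| = 1. Then A Aᵀ = diag(det A, det A, 1). -/
/-- The conjugacy relations on the rows imply the relaxed Cauchy–Riemann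
matrix equation A Aᵀ = diag(det A, det A, 1). -/
theorem stmt18 (A : Matrix (Fin 3) (Fin 3) ℝ)
    (h1 : A 0 = crossProduct (A 1) (A 2))
    (h2 : A 1 = crossProduct (A 2) (A 0))
    (h3 : ‖(WithLp.equiv 2 (Fin 3 → ℝ)).symm (A 2)‖ = 1) :
    A * A.transpose = Matrix.diagonal ![A.det, A.det, 1] := by
  have hn : A 2 0 ^ 2 + A 2 1 ^ 2 + A 2 2 ^ 2 = 1 := by
    have := h3
    rw [EuclideanSpace.norm_eq] at this
    rw [Real.sqrt_eq_one] at this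
    simpa [Fin.sum_univ_three, sq_abs] using this
  have e10 := congrFun h1 0
  have e11 := congrFun h1 1
  have e12 := congrFun h1 2
  have e20 := congrFun h2 0
  have e21 := congrFun h2 1
  have e22 := congrFun h2 2
  simp only [crossProduct, LinearMap.mk₂_apply, Matrix.cons_val_zero, Matrix.cons_val_one,
    Matrix.head_cons, Matrix.cons_val_two, Matrix.tail_cons] at e10 e11 e12 e20 e21 e22
  ext i j
  fin_cases i <;> fin_cases j <;>
    simp [Matrix.mul_apply, Matrix.diagonal, Fin.sum_univ_three, Matrix.det_fin_three]
  · linear_combination A 0 0 * e10 + A 0 1 * e11 + A 0 2 * e12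
  · linear_combination A 1 0 * e10 + A 1 1 * e11 + A 1 2 * e12
  · linear_combination A 2 0 * e10 + A 2 1 * e11 + A 2 2 * e12
  · linear_combination A 1 0 * e10 + A 1 1 * e11 + A 1 2 * e12
  · linear_combination A 1 0 * e20 + A 1 1 * e21 + A 1 2 * e22
  · linear_combination A 2 0 * e20 + A 2 1 * e21 + A 2 2 * e22
  · linear_combination A 2 0 * e10 + A 2 1 * e11 + A 2 2 * e12
  · linear_combination A 2 0 * e20 + A 2 1 * e21 + A 2 2 * e22
  · linear_combination hn
end

section
/- Conversely, let A be a real 3×3 matrix with rows a₁, a₂, a₃ satisfying A Aᵀ = diag(det A, det A, 1) with det A > 0. Then a₁ = a₂ ×ᵥ a₃ and a₂ = a₃ ×ᵥ a₁. -/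
/-- Conversely, the relaxed Cauchy–Riemann matrix equation with positive determinant
implies the conjugacy relations on the rows. -/
theorem stmt19 (A : Matrix (Fin 3) (Fin 3) ℝ)
    (h : A * A.transpose = Matrix.diagonal ![A.det, A.det, 1])
    (hdet : 0 < A.det) :
    A 0 = crossProduct (A 1) (A 2) ∧ A 1 = crossProduct (A 2) (A 0) := by
  have key : A.adjugate * Matrix.diagonal ![A.det, A.det, 1] = A.det • A.transpose := by
    rw [← h, ← Matrix.mul_assoc, Matrix.adjugate_mul, Matrix.smul_mul, Matrix.one_mul]
  have hne : A.det ≠ 0 := ne_of_gt hdet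
  have hadj : ∀ j : Fin 3, ∀ i : Fin 2, A.adjugate j i.castSucc = A i.castSucc j := by
    intro j i
    have := congrFun (congrFun key j) i.castSucc
    rw [Matrix.mul_diagonal] at this
    simp only [Matrix.smul_apply, Matrix.transpose_apply, smul_eq_mul] at this
    fin_cases i <;>
      simpa [mul_comm, hne] using this
  constructor
  · funext j
    have := hadj j 0
    rw [Matrix.adjugate_fin_three] at this
    fin_cases j <;>
      simp_all [cross_apply] <;> linarith
  · funext j
    have := hadj j 1
    rw [Matrix.adjugate_fin_three] at this
    fin_cases j <;>
      simp_all [cross_apply] <;> linarith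
end
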